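/- arXiv:0807.3602 — 3 statements merged into one kernel-verified Lean document; each statement's English description precedes it below -/
import Mathlib

section
/- For any coweight μ ∈ P, the signed length of the translation t_μ is ε(t_μ) = ⟨μ, 2ρ⟩. -/
/-!
Root by root, the hyperplanes `H_{α+kδ}` separating `x` from `y` correspond to the integers
`-k` strictly between `⟪x, α⟫` and `⟪y, α⟫`; counted with sign, there are
`⌊⟪y, α⟫⌋ - ⌊⟪x, α⟫⌋` of them as soon as neither end point is an integer. For `x = p₀` in the
open fundamental alcove and `y = p₀ + μ` with `μ` a coweight, this difference is `⟪μ, α⟫`, and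
summing over `R⁺` gives `⟪μ, 2ρ⟫`.
-/

open scoped RealInnerProductSpace BigOperators

attribute [local instance] Classical.propDecidable

noncomputable section

variable {V : Type*} [NormedAddCommGroup V] [InnerProductSpace ℝ V]

/-- The coroot `α^∨ = 2α/⟨α,α⟩` of a root `α`. -/
def coroot' (α : V) : V := (2 / ⟪α, α⟫) • α

/-- The reflection `s_α` in the linear hyperplane orthogonal to `α`. -/
def sref (α : V) : V → V := fun x => x - ⟪x, α⟫ • coroot' α

/-- Data of a reduced irreducible crystallographic root system `R` (recorded via its
positive system `Rpos` and simple roots `simple`) in a real inner product space. -/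
structure RSData (V : Type*) [NormedAddCommGroup V] [InnerProductSpace ℝ V] (n : ℕ) where
  Rpos : Finset V
  simple : Fin n → V
  hsimple : ∀ i, simple i ∈ Rpos
  hnz : ∀ α ∈ Rpos, α ≠ 0
  hdisj : ∀ α ∈ Rpos, -α ∉ Rpos
  hind : LinearIndependent ℝ simple
  hspan : Submodule.span ℝ (Set.range simple) = ⊤
  hposcomb : ∀ β ∈ Rpos, ∃ c : Fin n → ℕ, β = ∑ i, (c i : ℝ) • simple i
  hrefl : ∀ α ∈ Rpos, ∀ β ∈ Rpos, sref α β ∈ Rpos ∨ -(sref α β) ∈ Rpos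
  hcrys : ∀ α ∈ Rpos, ∀ β ∈ Rpos, ∃ z : ℤ, ⟪β, coroot' α⟫ = (z : ℝ)
  hred : ∀ α ∈ Rpos, ∀ c : ℝ, c • α ∈ Rpos → c = 1
  hirr : ∀ S : Set V, (∀ α ∈ Rpos, ∀ β ∈ Rpos, α ∈ S → ⟪α, β⟫ ≠ 0 → β ∈ S) →
      (∃ α ∈ Rpos, α ∈ S) → ∀ β ∈ Rpos, β ∈ S

/-- The finite Weyl group `W₀`, realized as the set of all compositions of the
reflections `s_α`, `α ∈ R`. -/
def W0Set (Rpos : Finset V) : Set (V → V) :=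
  {w | ∃ l : List V, (∀ a ∈ l, a ∈ Rpos) ∧ w = l.foldr (fun a f => sref a ∘ f) id}

/-- Pairs `(α, k)` (with `α ∈ R⁺`) indexing affine hyperplanes
`H_{α+kδ} = {v | ⟪v,α⟫ + k = 0}` that are crossed positively when moving from `x` to `y`
(i.e. `x` lies on the negative side and `y` on the positive side). -/
def sepPos (Rpos : Finset V) (x y : V) : Set (V × ℤ) :=
  {q | q.1 ∈ Rpos ∧ ⟪x, q.1⟫ + (q.2 : ℝ) < 0 ∧ 0 < ⟪y, q.1⟫ + (q.2 : ℝ)}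

/-- The signed number of affine hyperplanes separating `x` from `y`:
positively crossed ones minus negatively crossed ones. -/
def signedLen (Rpos : Finset V) (x y : V) : ℤ :=
  (Nat.card (sepPos Rpos x y) : ℤ) - (Nat.card (sepPos Rpos y x) : ℤ)

/-- The total number of affine hyperplanes separating `x` from `y`. -/
def totalLen (Rpos : Finset V) (x y : V) : ℕ :=
  Nat.card (sepPos Rpos x y) + Nat.card (sepPos Rpos y x)

open Set

instance Int.finite_preimage_Ioo (a b : ℝ) : Finite (((↑) : ℤ → ℝ) ⁻¹' Ioo a b) := by
  rw [Int.preimage_Ioo]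
  infer_instance

lemma Int.card_preimage_Ioo_of_notMem {a b : ℝ} (hb : b ∉ Set.range ((↑) : ℤ → ℝ)) :
    Nat.card (((↑) : ℤ → ℝ) ⁻¹' Ioo a b) = (⌊b⌋ - ⌊a⌋).toNat := by
  rw [Int.preimage_Ioo, ← Finset.coe_Ioo, Nat.card_coe_set_eq, ncard_coe_finset, Int.card_Ioo,
    (Int.ceil_eq_floor_add_one_iff_notMem b).mpr hb]
  congr 1
  ring

lemma Int.card_preimage_Ioo_sub_card_preimage_Ioo {a b : ℝ} (ha : a ∉ Set.range ((↑) : ℤ → ℝ))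
    (hb : b ∉ Set.range ((↑) : ℤ → ℝ)) :
    (Nat.card (((↑) : ℤ → ℝ) ⁻¹' Ioo a b) : ℤ) - Nat.card (((↑) : ℤ → ℝ) ⁻¹' Ioo b a) =
      ⌊b⌋ - ⌊a⌋ := by
  rw [Int.card_preimage_Ioo_of_notMem hb, Int.card_preimage_Ioo_of_notMem ha, ← neg_sub ⌊b⌋,
    Int.toNat_sub_toNat_neg]

/-- The hyperplane `H_{α+kδ}` is crossed from `x` to `y` exactly when `-k ∈ (⟪x, α⟫, ⟪y, α⟫)`. -/
def sepPosEquivSigma (Rpos : Finset V) (x y : V) :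
    sepPos Rpos x y ≃ Σ α : Rpos, ((↑) : ℤ → ℝ) ⁻¹' Ioo ⟪x, (α : V)⟫ ⟪y, (α : V)⟫ where
  toFun q := ⟨⟨q.1.1, q.2.1⟩, -q.1.2, by
    obtain ⟨_, hx, hy⟩ := q.2
    constructor <;> push_cast <;> linarith⟩
  invFun p := ⟨(p.1, -p.2.1), p.1.2, by
    obtain ⟨hx, hy⟩ := p.2.2
    constructor <;> push_cast <;> linarith⟩
  left_inv q := by simp
  right_inv p := by simp

lemma card_sepPos_eq_sum (Rpos : Finset V) (x y : V) :
    Nat.card (sepPos Rpos x y) =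
      ∑ α ∈ Rpos, Nat.card (((↑) : ℤ → ℝ) ⁻¹' Ioo ⟪x, α⟫ ⟪y, α⟫) := by
  rw [Nat.card_congr (sepPosEquivSigma Rpos x y), Nat.card_sigma,
    ← Finset.sum_coe_sort Rpos]

lemma signedLen_eq_sum_floor_sub {Rpos : Finset V} {x y : V}
    (hx : ∀ α ∈ Rpos, ⟪x, α⟫ ∉ Set.range ((↑) : ℤ → ℝ))
    (hy : ∀ α ∈ Rpos, ⟪y, α⟫ ∉ Set.range ((↑) : ℤ → ℝ)) :
    signedLen Rpos x y = ∑ α ∈ Rpos, (⌊⟪y, α⟫⌋ - ⌊⟪x, α⟫⌋) := by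
  rw [signedLen, card_sepPos_eq_sum, card_sepPos_eq_sum]
  push_cast
  rw [← Finset.sum_sub_distrib]
  exact Finset.sum_congr rfl fun α hα ↦
    Int.card_preimage_Ioo_sub_card_preimage_Ioo (hx α hα) (hy α hα)

lemma signedLen_add_eq_sum {Rpos : Finset V} {x μ : V} {z : V → ℤ}
    (hx : ∀ α ∈ Rpos, ⟪x, α⟫ ∉ Set.range ((↑) : ℤ → ℝ)) (hμ : ∀ α ∈ Rpos, ⟪μ, α⟫ = z α) :
    signedLen Rpos x (x + μ) = ∑ α ∈ Rpos, z α := by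
  have hinner : ∀ α ∈ Rpos, ⟪x + μ, α⟫ = ⟪x, α⟫ + z α := fun α hα ↦ by
    rw [inner_add_left, hμ α hα]
  have hxμ : ∀ α ∈ Rpos, ⟪x + μ, α⟫ ∉ Set.range ((↑) : ℤ → ℝ) := fun α hα ↦ by
    rw [hinner α hα, ← Int.fract_ne_zero_iff, Int.fract_add_intCast, Int.fract_ne_zero_iff]
    exact hx α hα
  rw [signedLen_eq_sum_floor_sub hx hxμ]
  refine Finset.sum_congr rfl fun α hα ↦ ?_
  rw [hinner α hα, Int.floor_add_intCast, add_sub_cancel_left]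

/-- For any coweight `μ ∈ P`, the signed length of the translation `t_μ`
is `ε(t_μ) = ⟨μ, 2ρ⟩`, where `ρ` is the half-sum of the positive roots.  Here the signed
length is computed by counting, with signs, the affine hyperplanes separating the
fundamental alcove (with interior point `p₀`) from its translate by `μ`. -/
theorem signed_length_translation {n : ℕ} (D : RSData V n) (p₀ : V)
    (hp₀ : ∀ α ∈ D.Rpos, 0 < ⟪p₀, α⟫ ∧ ⟪p₀, α⟫ < 1)
    (μ : V) (hμ : ∀ α ∈ D.Rpos, ∃ z : ℤ, ⟪μ, α⟫ = (z : ℝ)) :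
    (signedLen D.Rpos p₀ (p₀ + μ) : ℝ) =
      ⟪μ, (2 : ℝ) • ((1 / 2 : ℝ) • ∑ α ∈ D.Rpos, α)⟫ := by
  choose! z hz using hμ
  have hp₀_notMem : ∀ α ∈ D.Rpos, ⟪p₀, α⟫ ∉ Set.range ((↑) : ℤ → ℝ) := fun α hα ↦ by
    obtain ⟨h0, h1⟩ := hp₀ α hα
    rw [← Int.floor_lt_self_iff, Int.floor_eq_zero_iff.mpr ⟨h0.le, h1⟩, Int.cast_zero]
    exact h0
  rw [signedLen_add_eq_sum hp₀_notMem hz, smul_smul, mul_one_div_cancel two_ne_zero, one_smul,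
    inner_sum, Int.cast_sum]
  exact Finset.sum_congr rfl fun α hα ↦ (hz α hα).symm
end
end

section
/- For a dominant coweight λ, the saturated set Π_λ equals conv(W_0 λ) ∩ (λ + Q): a coweight μ lies in Π_λ if and only if μ ∈ λ + Q and μ lies in the convex hull of the Weyl group orbit of λ. -/
open scoped RealInnerProductSpace BigOperators

attribute [local instance] Classical.propDecidable

noncomputable section

variable {V : Type*} [NormedAddCommGroup V] [InnerProductSpace ℝ V]

/-- `Q⁺`: the set of nonnegative integer combinations of the simple coroots. -/
def QPlus {n : ℕ} (D : RSData V n) : Set V :=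
  {v | ∃ c : Fin n → ℕ, v = ∑ i, (c i : ℝ) • coroot' (D.simple i)}

/-- Membership in the coweight lattice `P`. -/
def IsCoweight {n : ℕ} (D : RSData V n) (v : V) : Prop :=
  ∀ α ∈ D.Rpos, ∃ z : ℤ, ⟪v, α⟫ = (z : ℝ)

/-- Dominant coweights `P⁺`. -/
def IsDominant {n : ℕ} (D : RSData V n) (v : V) : Prop :=
  IsCoweight D v ∧ ∀ α ∈ D.Rpos, 0 ≤ ⟪v, α⟫

/-- The saturated set `Π_λ = {wμ : μ ∈ P⁺, μ ⪯ λ, w ∈ W₀}` with highest coweight `λ`. -/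
def PiSet {n : ℕ} (D : RSData V n) (lam : V) : Set V :=
  {x | ∃ μ, (IsDominant D μ ∧ lam - μ ∈ QPlus D) ∧ ∃ w ∈ W0Set D.Rpos, x = w μ}


/-!
Let `C` be the cone of nonnegative real combinations of simple roots. The key fact is that
`λ - wλ ∈ C` for dominant `λ` and all `w ∈ W₀`. Every reflection is conjugate to a simple one
(descent on the height), so `w` is a word in simple reflections; appending a letter `sₜ` to a
word `u` adds `⟪λ, αₜ⟫ (u αₜ)^∨ ∈ C` when `u αₜ > 0`, and otherwise the deletion property
shortens the word. Hence `conv(W₀λ) ⊆ λ - C`, and a point of `conv(W₀λ) ∩ (λ + Q)` moved into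
the dominant chamber lies in `λ - (C ∩ Q) = λ - Q⁺`. Conversely a dominant `μ ⪯ λ` lies in
`conv(W₀λ)` by a separating hyperplane argument, and `W₀` preserves both `conv(W₀λ)` and `λ + Q`.
-/

section Reflection

lemma sref_eq_sub_inner_coroot' (α x : V) : sref α x = x - ⟪x, coroot' α⟫ • α := by
  simp only [sref, coroot', real_inner_smul_right, smul_smul, mul_comm]

lemma sref_add (α x y : V) : sref α (x + y) = sref α x + sref α y := by
  simp only [sref, inner_add_left]; module

lemma sref_smul (α : V) (c : ℝ) (x : V) : sref α (c • x) = c • sref α x := by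
  simp only [sref, real_inner_smul_left, smul_sub, smul_smul]

lemma inner_sref_sref (α x y : V) : ⟪sref α x, sref α y⟫ = ⟪x, y⟫ := by
  rcases eq_or_ne α 0 with rfl | hα
  · simp [sref, coroot']
  have hαα : ⟪α, α⟫ ≠ 0 := (real_inner_self_pos.2 hα).ne'
  simp only [sref, coroot', inner_sub_left, inner_sub_right, real_inner_smul_left,
    real_inner_smul_right, real_inner_comm α x, real_inner_comm y α]
  field_simp
  ring

lemma sref_sref (α x : V) : sref α (sref α x) = x := by
  rcases eq_or_ne α 0 with rfl | hα
  · simp [sref, coroot']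
  have hαα : ⟪α, α⟫ ≠ 0 := (real_inner_self_pos.2 hα).ne'
  have h : ⟪sref α x, α⟫ = -⟪x, α⟫ := by
    simp only [sref, coroot', inner_sub_left, real_inner_smul_left]
    field_simp
    ring
  change sref α x - ⟪sref α x, α⟫ • coroot' α = x
  rw [h]
  simp only [sref]
  module

def srefIsometry (α : V) : V →ₗᵢ[ℝ] V :=
  (IsLinearMap.mk' (sref α) ⟨sref_add α, sref_smul α⟩).isometryOfInner (inner_sref_sref α)

@[simp]
lemma coe_srefIsometry (α : V) : ⇑(srefIsometry α) = sref α := rfl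

lemma inner_sref_left (α x y : V) : ⟪sref α x, y⟫ = ⟪x, sref α y⟫ := by
  conv_lhs => rw [← sref_sref α y]
  exact inner_sref_sref α x (sref α y)

lemma coroot'_map (e : V →ₗᵢ[ℝ] V) (γ : V) : coroot' (e γ) = e (coroot' γ) := by
  simp only [coroot', e.inner_map_map, map_smul]

lemma sref_map (e : V →ₗᵢ[ℝ] V) (γ x : V) : sref (e γ) (e x) = e (sref γ x) := by
  simp only [sref, coroot'_map, e.inner_map_map, map_sub, map_smul]

lemma sref_sref_apply (α β x : V) : sref (sref α β) x = sref α (sref β (sref α x)) := by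
  simpa [sref_sref] using sref_map (srefIsometry α) β (sref α x)

end Reflection

namespace W0Set

variable {R : Finset V}

lemma id_mem (R : Finset V) : id ∈ W0Set R := ⟨[], by simp, rfl⟩

lemma sref_comp_mem {α : V} (hα : α ∈ R) {w : V → V} (hw : w ∈ W0Set R) :
    sref α ∘ w ∈ W0Set R := by
  obtain ⟨l, hl, rfl⟩ := hw
  exact ⟨α :: l, by simpa [hα] using hl, rfl⟩

lemma sref_mem {α : V} (hα : α ∈ R) : sref α ∈ W0Set R := sref_comp_mem hα (id_mem R)

@[elab_as_elim]
lemma induction {P : (w : V → V) → w ∈ W0Set R → Prop} (id : P id (id_mem R))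
    (sref_comp : ∀ α (hα : α ∈ R) w (hw : w ∈ W0Set R), P w hw →
      P (sref α ∘ w) (sref_comp_mem hα hw))
    {w : V → V} (hw : w ∈ W0Set R) : P w hw := by
  obtain ⟨l, hl, rfl⟩ := hw
  induction l with
  | nil => exact id
  | cons a l ih =>
    have hl' : ∀ b ∈ l, b ∈ R := fun b hb => hl b (List.mem_cons_of_mem a hb)
    exact sref_comp a (hl a List.mem_cons_self) _ _ (ih hl')

lemma comp_mem {w w' : V → V} (hw : w ∈ W0Set R) (hw' : w' ∈ W0Set R) : w ∘ w' ∈ W0Set R := by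
  induction hw using W0Set.induction with
  | id => exact hw'
  | sref_comp α hα w _ ih => exact sref_comp_mem hα ih

lemma exists_linearIsometry {w : V → V} (hw : w ∈ W0Set R) : ∃ e : V →ₗᵢ[ℝ] V, ⇑e = w := by
  induction hw using W0Set.induction with
  | id => exact ⟨LinearIsometry.id, rfl⟩
  | sref_comp α _ w _ ih =>
    obtain ⟨e, rfl⟩ := ih
    exact ⟨(srefIsometry α).comp e, rfl⟩

lemma exists_inverse {w : V → V} (hw : w ∈ W0Set R) :
    ∃ w' ∈ W0Set R, (∀ x, w' (w x) = x) ∧ ∀ x, w (w' x) = x := by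
  induction hw using W0Set.induction with
  | id => exact ⟨id, id_mem R, fun _ => rfl, fun _ => rfl⟩
  | sref_comp α hα w _ ih =>
    obtain ⟨w', hw', hleft, hright⟩ := ih
    refine ⟨w' ∘ sref α, comp_mem hw' (sref_mem hα), fun x => ?_, fun x => ?_⟩
    · simp [sref_sref, hleft]
    · simp [sref_sref, hright]

end W0Set

section Roots

variable {n : ℕ} (D : RSData V n)

def simpleRootBasis : Module.Basis (Fin n) ℝ V := Module.Basis.mk D.hind D.hspan.ge

lemma simpleRootBasis_apply (i : Fin n) : simpleRootBasis D i = D.simple i :=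
  Module.Basis.mk_apply _ _ _

lemma simpleRootBasis_repr_sum_smul (d : Fin n → ℝ) (j : Fin n) :
    (simpleRootBasis D).repr (∑ i, d i • D.simple i) j = d j := by
  simp_rw [← simpleRootBasis_apply D, Module.Basis.repr_sum_self]

def height : V →ₗ[ℝ] ℝ := ∑ i, (simpleRootBasis D).coord i

lemma height_apply (v : V) : height D v = ∑ i, (simpleRootBasis D).repr v i := by
  simp [height]

lemma height_simple (i : Fin n) : height D (D.simple i) = 1 := by
  rw [height_apply, ← simpleRootBasis_apply D i, Module.Basis.repr_self]
  simp [Finsupp.single_apply]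

variable {D}

lemma repr_nonneg_of_mem_Rpos {β : V} (hβ : β ∈ D.Rpos) (j : Fin n) :
    0 ≤ (simpleRootBasis D).repr β j := by
  obtain ⟨c, rfl⟩ := D.hposcomb β hβ
  rw [simpleRootBasis_repr_sum_smul]
  positivity

lemma height_nonneg_of_mem_Rpos {β : V} (hβ : β ∈ D.Rpos) : 0 ≤ height D β := by
  rw [height_apply]
  exact Finset.sum_nonneg fun j _ => repr_nonneg_of_mem_Rpos hβ j

lemma exists_inner_simple_pos {β : V} (hβ : β ∈ D.Rpos) : ∃ i, 0 < ⟪β, D.simple i⟫ := by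
  by_contra! hle
  have hββ : 0 < ⟪β, β⟫ := real_inner_self_pos.2 (D.hnz β hβ)
  obtain ⟨c, hc⟩ := D.hposcomb β hβ
  have hsum : ⟪β, β⟫ = ∑ i, (c i : ℝ) * ⟪β, D.simple i⟫ := by
    nth_rewrite 2 [hc]
    simp only [inner_sum, real_inner_smul_right]
  have : ⟪β, β⟫ ≤ 0 := hsum ▸ Finset.sum_nonpos fun i _ =>
    mul_nonpos_of_nonneg_of_nonpos (Nat.cast_nonneg _) (hle i)
  linarith

lemma repr_sref_simple_of_ne (x : V) {i j : Fin n} (hji : j ≠ i) :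
    (simpleRootBasis D).repr (sref (D.simple i) x) j = (simpleRootBasis D).repr x j := by
  rw [sref_eq_sub_inner_coroot', map_sub, map_smul, ← simpleRootBasis_apply D i,
    Module.Basis.repr_self]
  simp [hji.symm]

lemma sref_simple_mem_Rpos {β : V} (hβ : β ∈ D.Rpos) {i : Fin n} (hβi : β ≠ D.simple i) :
    sref (D.simple i) β ∈ D.Rpos := by
  refine (D.hrefl _ (D.hsimple i) _ hβ).resolve_right fun hneg => hβi ?_
  have hcoord : ∀ j, j ≠ i → (simpleRootBasis D).repr β j = 0 := fun j hji => by
    have h := repr_nonneg_of_mem_Rpos hneg j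
    rw [map_neg, Finsupp.neg_apply, repr_sref_simple_of_ne β hji] at h
    exact le_antisymm (by linarith) (repr_nonneg_of_mem_Rpos hβ j)
  have hβ_eq : β = (simpleRootBasis D).repr β i • D.simple i := by
    conv_lhs => rw [← (simpleRootBasis D).sum_repr β]
    rw [Finset.sum_eq_single i (fun j _ hji => by rw [hcoord j hji, zero_smul]) (by simp),
      simpleRootBasis_apply]
  have hβi_coord : (simpleRootBasis D).repr β i = 1 := D.hred _ (D.hsimple i) _ (hβ_eq ▸ hβ)
  rwa [hβi_coord, one_smul] at hβ_eq

lemma W0Set.apply_mem_Rpos_or_neg {w : V → V} (hw : w ∈ W0Set D.Rpos) {α : V}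
    (hα : α ∈ D.Rpos) : w α ∈ D.Rpos ∨ -w α ∈ D.Rpos := by
  induction hw using W0Set.induction with
  | id => exact Or.inl hα
  | sref_comp a ha w _ ih =>
    have hneg : sref a (-w α) = -sref a (w α) := by
      simpa using sref_smul a (-1) (w α)
    rcases ih with h | h
    · exact D.hrefl a ha _ h
    · rcases D.hrefl a ha _ h with h' | h'
      · exact Or.inr (hneg ▸ h')
      · exact Or.inl (by rwa [hneg, neg_neg] at h')

end Roots

section SimpleWord

variable {n : ℕ} (D : RSData V n)

def simpleWord (l : List (Fin n)) : V → V := l.foldr (fun i f => sref (D.simple i) ∘ f) id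

variable {D}

@[simp]
lemma simpleWord_nil : simpleWord D [] = id := rfl

@[simp]
lemma simpleWord_cons (i : Fin n) (l : List (Fin n)) :
    simpleWord D (i :: l) = sref (D.simple i) ∘ simpleWord D l := rfl

lemma simpleWord_append (l₁ l₂ : List (Fin n)) :
    simpleWord D (l₁ ++ l₂) = simpleWord D l₁ ∘ simpleWord D l₂ := by
  induction l₁ with
  | nil => rfl
  | cons i l ih => rw [List.cons_append, simpleWord_cons, simpleWord_cons, ih]; rfl

lemma simpleWord_mem (l : List (Fin n)) : simpleWord D l ∈ W0Set D.Rpos := by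
  induction l with
  | nil => exact W0Set.id_mem _
  | cons i l ih => exact W0Set.sref_comp_mem (D.hsimple i) ih

/-- Descent on the height: if `β ≠ αᵢ` and `⟪β, αᵢ⟫ > 0`, then `β' = sᵢβ` is a positive root of
smaller height and `s_β = sᵢ s_{β'} sᵢ`. -/
lemma exists_simpleWord_eq_sref {β : V} (hβ : β ∈ D.Rpos) : ∃ l, sref β = simpleWord D l := by
  obtain ⟨N, hN⟩ := exists_nat_gt (height D β)
  induction N generalizing β with
  | zero => exact absurd hN (by simpa using height_nonneg_of_mem_Rpos hβ)
  | succ N ih =>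
    obtain ⟨i, hi⟩ := exists_inner_simple_pos hβ
    by_cases hβi : β = D.simple i
    · exact ⟨[i], by simp [hβi]⟩
    obtain ⟨z, hz⟩ := D.hcrys _ (D.hsimple i) _ hβ
    have hz_pos : (0 : ℝ) < z := by
      rw [← hz, coroot', real_inner_smul_right]
      exact mul_pos (div_pos two_pos (real_inner_self_pos.2 (D.hnz _ (D.hsimple i)))) hi
    have hz_one : (1 : ℝ) ≤ z := by exact_mod_cast (show (0 : ℤ) < z by exact_mod_cast hz_pos)
    have hheight : height D (sref (D.simple i) β) = height D β - z := by
      rw [sref_eq_sub_inner_coroot', hz, map_sub, map_smul, height_simple, smul_eq_mul, mul_one]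
    obtain ⟨l, hl⟩ := ih (sref_simple_mem_Rpos hβ hβi) (by push_cast at hN; linarith)
    refine ⟨i :: l ++ [i], funext fun x => ?_⟩
    have hconj := sref_sref_apply (D.simple i) (sref (D.simple i) β) x
    rw [sref_sref] at hconj
    simp [simpleWord_append, hconj, hl]

lemma W0Set.exists_simpleWord_eq {w : V → V} (hw : w ∈ W0Set D.Rpos) :
    ∃ l, w = simpleWord D l := by
  induction hw using W0Set.induction with
  | id => exact ⟨[], rfl⟩
  | sref_comp α hα w _ ih =>
    obtain ⟨l, rfl⟩ := ih
    obtain ⟨l', hl'⟩ := exists_simpleWord_eq_sref hα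
    exact ⟨l' ++ l, by rw [simpleWord_append, hl']⟩

/-- Deletion property. If `u αₜ > 0` while `sᵢ u αₜ < 0`, then `u αₜ = αᵢ`, so that
`sᵢ u sₜ = s_{u αₜ} u sₜ = u`. -/
lemma exists_shorter_simpleWord {l : List (Fin n)} {t : Fin n}
    (h : -simpleWord D l (D.simple t) ∈ D.Rpos) :
    ∃ l', l'.length < l.length ∧ simpleWord D l ∘ sref (D.simple t) = simpleWord D l' := by
  induction l with
  | nil => exact absurd h (D.hdisj _ (D.hsimple t))
  | cons i l ih =>
    rcases W0Set.apply_mem_Rpos_or_neg (simpleWord_mem l) (D.hsimple t) with hpos | hneg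
    · have hγ : simpleWord D l (D.simple t) = D.simple i := by
        by_contra hne
        exact D.hdisj _ (sref_simple_mem_Rpos hpos hne) h
      refine ⟨l, by simp, funext fun x => ?_⟩
      obtain ⟨e, he⟩ := W0Set.exists_linearIsometry (simpleWord_mem (D := D) l)
      have hconj := sref_map e (D.simple t) x
      rw [he, hγ] at hconj
      simp [← hconj, sref_sref]
    · obtain ⟨l', hlen, hl'⟩ := ih hneg
      exact ⟨i :: l', by simpa using hlen, by rw [simpleWord_cons, Function.comp_assoc, hl',
        simpleWord_cons]⟩

end SimpleWord

section PosRootCone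

variable {n : ℕ} (D : RSData V n)

/-- The `ℝ≥0`-span of the simple roots, equivalently of the simple coroots. -/
def posRootCone : PointedCone ℝ V where
  carrier := {v | ∀ i, 0 ≤ (simpleRootBasis D).repr v i}
  zero_mem' := by simp
  add_mem' hx hy i := by simpa using add_nonneg (hx i) (hy i)
  smul_mem' c x hx i := by
    change 0 ≤ (simpleRootBasis D).repr ((c : ℝ) • x) i
    rw [map_smul, Finsupp.smul_apply, smul_eq_mul]
    exact mul_nonneg c.2 (hx i)

variable {D}

lemma mem_posRootCone {v : V} : v ∈ posRootCone D ↔ ∀ i, 0 ≤ (simpleRootBasis D).repr v i := Iff.rfl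

lemma coroot'_mem_posRootCone {β : V} (hβ : β ∈ D.Rpos) : coroot' β ∈ posRootCone D :=
  (posRootCone D).smul_mem (div_nonneg zero_le_two real_inner_self_nonneg)
    (mem_posRootCone.2 (repr_nonneg_of_mem_Rpos hβ))

lemma QPlus_subset_posRootCone : QPlus D ⊆ posRootCone D := by
  rintro _ ⟨c, rfl⟩
  exact Submodule.sum_mem _ fun i _ => (posRootCone D).smul_mem (Nat.cast_nonneg _)
    (coroot'_mem_posRootCone (D.hsimple i))

lemma inner_nonneg_of_mem_posRootCone {f v : V} (hf : ∀ i, 0 ≤ ⟪f, D.simple i⟫)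
    (hv : v ∈ posRootCone D) : 0 ≤ ⟪f, v⟫ := by
  rw [← (simpleRootBasis D).sum_repr v, inner_sum]
  exact Finset.sum_nonneg fun i _ => by
    rw [real_inner_smul_right, simpleRootBasis_apply]
    exact mul_nonneg (hv i) (hf i)

lemma inner_root_nonneg_of_forall_simple {f : V} (hf : ∀ i, 0 ≤ ⟪f, D.simple i⟫) {α : V}
    (hα : α ∈ D.Rpos) : 0 ≤ ⟪f, α⟫ :=
  inner_nonneg_of_mem_posRootCone hf (repr_nonneg_of_mem_Rpos hα)

lemma sub_simpleWord_mem_posRootCone {lam : V} (hlam : ∀ α ∈ D.Rpos, 0 ≤ ⟪lam, α⟫)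
    (l : List (Fin n)) : lam - simpleWord D l lam ∈ posRootCone D := by
  induction hl : l.length using Nat.strong_induction_on generalizing l with
  | _ N ih =>
    rcases List.eq_nil_or_concat l with rfl | ⟨l₁, t, rfl⟩
    · simp
    rw [List.concat_eq_append] at hl ⊢
    have hlen : l₁.length < N := by simp at hl; omega
    rcases W0Set.apply_mem_Rpos_or_neg (simpleWord_mem l₁) (D.hsimple t) with hpos | hneg
    · obtain ⟨e, he⟩ := W0Set.exists_linearIsometry (simpleWord_mem (D := D) l₁)
      have hdecomp : lam - simpleWord D (l₁ ++ [t]) lam = (lam - simpleWord D l₁ lam)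
          + ⟪lam, D.simple t⟫ • coroot' (simpleWord D l₁ (D.simple t)) := by
        simp only [simpleWord_append, ← he, coroot'_map, simpleWord_cons, simpleWord_nil,
          Function.comp_apply, id, sref, map_sub, map_smul]
        abel
      rw [hdecomp]
      exact add_mem (ih _ hlen l₁ rfl)
        ((posRootCone D).smul_mem (hlam _ (D.hsimple t)) (coroot'_mem_posRootCone hpos))
    · obtain ⟨l', hlen', hl'⟩ := exists_shorter_simpleWord hneg
      rw [simpleWord_append, show simpleWord D [t] = sref (D.simple t) from rfl, hl']
      exact ih _ (hlen'.trans hlen) l' rfl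

lemma W0Set.sub_apply_mem_posRootCone {w : V → V} (hw : w ∈ W0Set D.Rpos) {lam : V}
    (hlam : ∀ α ∈ D.Rpos, 0 ≤ ⟪lam, α⟫) : lam - w lam ∈ posRootCone D := by
  obtain ⟨l, rfl⟩ := W0Set.exists_simpleWord_eq hw
  exact sub_simpleWord_mem_posRootCone hlam l

end PosRootCone

section Orbit

variable {n : ℕ} {D : RSData V n}

def weylOrbit (R : Finset V) (v : V) : Set V := {x | ∃ w ∈ W0Set R, x = w v}

/-- An element of `W₀` is determined by the images of the simple roots, which are roots. -/
lemma W0Set.finite : (W0Set D.Rpos).Finite := by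
  have hroots : {x : V | x ∈ D.Rpos ∨ -x ∈ D.Rpos}.Finite :=
    D.Rpos.finite_toSet.union (D.Rpos.finite_toSet.preimage neg_injective.injOn)
  refine Set.Finite.of_finite_image ((Set.Finite.pi fun _ => hroots).subset ?_)
    (f := fun w i => w (D.simple i)) ?_
  · rintro _ ⟨w, hw, rfl⟩ i -
    exact W0Set.apply_mem_Rpos_or_neg hw (D.hsimple i)
  · intro w hw w' hw' h
    obtain ⟨e, rfl⟩ := W0Set.exists_linearIsometry hw
    obtain ⟨e', rfl⟩ := W0Set.exists_linearIsometry hw'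
    have : e.toLinearMap = e'.toLinearMap :=
      (simpleRootBasis D).ext fun i => by simpa [simpleRootBasis_apply] using congrFun h i
    exact congrArg (fun g : V →ₗ[ℝ] V => ⇑g) this

lemma weylOrbit_finite (v : V) : (weylOrbit D.Rpos v).Finite := by
  refine ((W0Set.finite (D := D)).image fun w => w v).subset ?_
  rintro _ ⟨w, hw, rfl⟩
  exact ⟨w, hw, rfl⟩

/-- A point of maximal height in the orbit is dominant, since `sᵢ` raises the height of any
`v` with `⟪v, αᵢ⟫ < 0`. -/
lemma W0Set.exists_dominant (v : V) :
    ∃ w ∈ W0Set D.Rpos, ∀ α ∈ D.Rpos, 0 ≤ ⟪w v, α⟫ := by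
  obtain ⟨w, hw, hmax⟩ := Set.exists_max_image _ (fun w => height D (w v)) W0Set.finite
    ⟨id, W0Set.id_mem _⟩
  refine ⟨w, hw, fun α => inner_root_nonneg_of_forall_simple fun i => ?_⟩
  by_contra! hneg
  have hmax_i := hmax _ (W0Set.sref_comp_mem (D.hsimple i) hw)
  have hαα : 0 < 2 / ⟪D.simple i, D.simple i⟫ :=
    div_pos two_pos (real_inner_self_pos.2 (D.hnz _ (D.hsimple i)))
  simp only [Function.comp_apply, sref, coroot', map_sub, map_smul, height_simple,
    smul_eq_mul] at hmax_i
  nlinarith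

lemma W0Set.apply_mem_convexHull_weylOrbit {w : V → V} (hw : w ∈ W0Set D.Rpos) {v x : V}
    (hx : x ∈ convexHull ℝ (weylOrbit D.Rpos v)) :
    w x ∈ convexHull ℝ (weylOrbit D.Rpos v) := by
  obtain ⟨e, rfl⟩ := W0Set.exists_linearIsometry hw
  have himage : ⇑e '' weylOrbit D.Rpos v ⊆ weylOrbit D.Rpos v := by
    rintro _ ⟨_, ⟨u, hu, rfl⟩, rfl⟩
    exact ⟨e ∘ u, W0Set.comp_mem hw hu, rfl⟩
  have hex : e x ∈ e.toLinearMap '' convexHull ℝ (weylOrbit D.Rpos v) := ⟨x, hx, rfl⟩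
  rw [LinearMap.image_convexHull] at hex
  exact convexHull_mono himage hex

lemma sub_mem_posRootCone_of_mem_convexHull {lam x : V} (hlam : ∀ α ∈ D.Rpos, 0 ≤ ⟪lam, α⟫)
    (hx : x ∈ convexHull ℝ (weylOrbit D.Rpos lam)) : lam - x ∈ posRootCone D := by
  refine convexHull_min (t := {y | lam - y ∈ posRootCone D}) ?_ ?_ hx
  · rintro _ ⟨w, hw, rfl⟩
    exact W0Set.sub_apply_mem_posRootCone hw hlam
  · intro y hy z hz a b ha hb hab
    have hdecomp : lam - (a • y + b • z) = a • (lam - y) + b • (lam - z) := by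
      linear_combination (norm := module) (-hab) • lam
    show lam - (a • y + b • z) ∈ posRootCone D
    rw [hdecomp]
    exact add_mem ((posRootCone D).smul_mem ha hy) ((posRootCone D).smul_mem hb hz)

/-- If `μ ∉ conv(W₀λ)`, separate it by `⟪z, ·⟫` and move `z` to a dominant `wz`; dominance
of `μ` and `λ - μ ∈ ℝ≥0 R⁺` then give `⟪z, μ⟫ ≤ ⟪wz, μ⟫ ≤ ⟪wz, λ⟫ = ⟪z, w⁻¹λ⟫`. -/
lemma mem_convexHull_weylOrbit_of_dominant {lam μ : V} (hμ : ∀ α ∈ D.Rpos, 0 ≤ ⟪μ, α⟫)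
    (hle : lam - μ ∈ posRootCone D) : μ ∈ convexHull ℝ (weylOrbit D.Rpos lam) := by
  have : FiniteDimensional ℝ V := Module.Finite.of_basis (simpleRootBasis D)
  by_contra hμ_not
  obtain ⟨f, u, hf_hull, hf_μ⟩ := geometric_hahn_banach_closed_point (convex_convexHull ℝ _)
    ((weylOrbit_finite lam).isClosed_convexHull ℝ) hμ_not
  set z := (InnerProductSpace.toDual ℝ V).symm f
  have hz : ∀ y, f y = ⟪z, y⟫ := fun y => InnerProductSpace.toDual_symm_apply.symm
  obtain ⟨w, hw, hwz⟩ := W0Set.exists_dominant (D := D) z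
  obtain ⟨w', hw', -, hright⟩ := W0Set.exists_inverse hw
  obtain ⟨e, rfl⟩ := W0Set.exists_linearIsometry hw
  have hwz' : ∀ i, 0 ≤ ⟪e z, D.simple i⟫ := fun i => hwz _ (D.hsimple i)
  have hmove : ⟪z, μ⟫ ≤ ⟪e z, μ⟫ := by
    have := inner_nonneg_of_mem_posRootCone hwz' (W0Set.sub_apply_mem_posRootCone hw hμ)
    rw [inner_sub_right, e.inner_map_map] at this
    linarith
  have hcone : ⟪e z, μ⟫ ≤ ⟪e z, lam⟫ := by
    have := inner_nonneg_of_mem_posRootCone hwz' hle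
    rw [inner_sub_right] at this
    linarith
  have hsep : ⟪e z, lam⟫ < u := by
    rw [← hright lam, e.inner_map_map, ← hz]
    exact hf_hull _ (subset_convexHull ℝ _ ⟨w', hw', rfl⟩)
  linarith [hz μ]

end Orbit

section Lattice

variable {n : ℕ} (D : RSData V n)

def corootLattice : Submodule ℤ V :=
  Submodule.span ℤ (Set.range fun i : Fin n => coroot' (D.simple i))

variable {D}

lemma coroot'_simple_mem_corootLattice (i : Fin n) : coroot' (D.simple i) ∈ corootLattice D :=
  Submodule.subset_span ⟨i, rfl⟩

lemma QPlus_subset_corootLattice : QPlus D ⊆ corootLattice D := by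
  rintro _ ⟨c, rfl⟩
  refine Submodule.sum_mem _ fun i _ => ?_
  rw [Nat.cast_smul_eq_nsmul ℝ]
  exact nsmul_mem (coroot'_simple_mem_corootLattice i) _

lemma mem_QPlus_of_mem_posRootCone {v : V} (hcone : v ∈ posRootCone D)
    (hlat : v ∈ corootLattice D) : v ∈ QPlus D := by
  obtain ⟨c, rfl⟩ := (Submodule.mem_span_range_iff_exists_fun ℤ).mp hlat
  have hc : ∀ i, 0 ≤ c i := fun i => by
    have hi := hcone i
    simp_rw [← Int.cast_smul_eq_zsmul ℝ, coroot', smul_smul, simpleRootBasis_repr_sum_smul] at hi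
    have hpos : 0 < 2 / ⟪D.simple i, D.simple i⟫ :=
      div_pos two_pos (real_inner_self_pos.2 (D.hnz _ (D.hsimple i)))
    exact_mod_cast nonneg_of_mul_nonneg_left hi hpos
  refine ⟨fun i => (c i).toNat, Finset.sum_congr rfl fun i _ => ?_⟩
  rw [← Int.cast_smul_eq_zsmul ℝ, ← Int.toNat_of_nonneg (hc i)]
  norm_cast

lemma inner_eq_int_of_mem_corootLattice {q : V} (hq : q ∈ corootLattice D) {α : V}
    (hα : α ∈ D.Rpos) : ∃ z : ℤ, ⟪q, α⟫ = z := by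
  induction hq using Submodule.span_induction with
  | mem _ hx =>
    obtain ⟨i, rfl⟩ := hx
    rw [real_inner_comm]
    exact D.hcrys _ (D.hsimple i) _ hα
  | zero => exact ⟨0, by simp⟩
  | add _ _ _ _ hx hy =>
    obtain ⟨a, ha⟩ := hx
    obtain ⟨b, hb⟩ := hy
    exact ⟨a + b, by rw [inner_add_left, ha, hb]; push_cast; ring⟩
  | smul k _ _ hx =>
    obtain ⟨a, ha⟩ := hx
    exact ⟨k * a, by rw [← Int.cast_smul_eq_zsmul ℝ, real_inner_smul_left, ha]; push_cast; ring⟩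

lemma IsCoweight.add_of_mem_corootLattice {v q : V} (hv : IsCoweight D v)
    (hq : q ∈ corootLattice D) : IsCoweight D (v + q) := fun α hα => by
  obtain ⟨a, ha⟩ := hv α hα
  obtain ⟨b, hb⟩ := inner_eq_int_of_mem_corootLattice hq hα
  exact ⟨a + b, by rw [inner_add_left, ha, hb]; push_cast; ring⟩

lemma IsCoweight.sref {v α : V} (hv : IsCoweight D v) (hα : α ∈ D.Rpos) :
    IsCoweight D (sref α v) := fun β hβ => by
  rw [inner_sref_left]
  rcases D.hrefl α hα β hβ with h | h
  · exact hv _ h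
  · obtain ⟨z, hz⟩ := hv _ h
    exact ⟨-z, by rw [inner_neg_right] at hz; push_cast; linarith⟩

lemma W0Set.isCoweight {w : V → V} (hw : w ∈ W0Set D.Rpos) {v : V} (hv : IsCoweight D v) :
    IsCoweight D (w v) := by
  induction hw using W0Set.induction with
  | id => exact hv
  | sref_comp α hα w _ ih => exact ih.sref hα

lemma sref_simple_sub_mem_corootLattice {v : V} (hv : IsCoweight D v) (i : Fin n) :
    sref (D.simple i) v - v ∈ corootLattice D := by
  obtain ⟨z, hz⟩ := hv _ (D.hsimple i)
  rw [sref, hz, sub_sub_cancel_left, ← neg_smul, ← Int.cast_neg, Int.cast_smul_eq_zsmul]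
  exact Submodule.smul_mem _ _ (coroot'_simple_mem_corootLattice i)

lemma W0Set.apply_sub_mem_corootLattice {w : V → V} (hw : w ∈ W0Set D.Rpos) {v : V}
    (hv : IsCoweight D v) : w v - v ∈ corootLattice D := by
  obtain ⟨l, rfl⟩ := W0Set.exists_simpleWord_eq hw
  clear hw
  induction l with
  | nil => simp
  | cons i l ih =>
    have hsplit : simpleWord D (i :: l) v - v
        = (sref (D.simple i) (simpleWord D l v) - simpleWord D l v) + (simpleWord D l v - v) := by
      simp
    rw [hsplit]
    exact add_mem
      (sref_simple_sub_mem_corootLattice (W0Set.isCoweight (simpleWord_mem l) hv) i) ih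

end Lattice

/-- For a dominant coweight `λ`, the saturated set `Π_λ` equals
`conv(W₀λ) ∩ (λ + Q)`: a coweight `μ` lies in `Π_λ` iff `μ ∈ λ + Q` and `μ` lies in the
convex hull of the Weyl group orbit of `λ`. -/
theorem PiSet_eq_convexHull_inter {n : ℕ} (D : RSData V n) (lam : V)
    (hlam : IsDominant D lam) :
    PiSet D lam =
      convexHull ℝ {x | ∃ w ∈ W0Set D.Rpos, x = w lam} ∩
        {x | x - lam ∈ (Submodule.span ℤ (Set.range fun i : Fin n => coroot' (D.simple i)) : Submodule ℤ V)} := by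
  ext x
  constructor
  · rintro ⟨μ, ⟨⟨hμ_coweight, hμ_dom⟩, hμ_le⟩, w, hw, rfl⟩
    refine ⟨W0Set.apply_mem_convexHull_weylOrbit hw
      (mem_convexHull_weylOrbit_of_dominant hμ_dom (QPlus_subset_posRootCone hμ_le)), ?_⟩
    have hsplit : w μ - lam = (w μ - μ) - (lam - μ) := by abel
    change w μ - lam ∈ corootLattice D
    rw [hsplit]
    exact sub_mem (W0Set.apply_sub_mem_corootLattice hw hμ_coweight)
      (QPlus_subset_corootLattice hμ_le)
  · rintro ⟨hx_hull, hx_lat : x - lam ∈ corootLattice D⟩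
    have hx_coweight : IsCoweight D x := by
      simpa using hlam.1.add_of_mem_corootLattice hx_lat
    obtain ⟨w, hw, hwx_dom⟩ := W0Set.exists_dominant (D := D) x
    obtain ⟨w', hw', hleft, -⟩ := W0Set.exists_inverse hw
    have hsplit : lam - w x = -(x - lam) - (w x - x) := by abel
    refine ⟨w x, ⟨⟨W0Set.isCoweight hw hx_coweight, hwx_dom⟩, mem_QPlus_of_mem_posRootCone ?_ ?_⟩,
      w', hw', (hleft x).symm⟩
    · exact sub_mem_posRootCone_of_mem_convexHull hlam.2
        (W0Set.apply_mem_convexHull_weylOrbit hw hx_hull)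
    · rw [hsplit]
      exact sub_mem (neg_mem hx_lat) (W0Set.apply_sub_mem_corootLattice hw hx_coweight)
end
end

section
/- Let X be a thick building of irreducible type W whose Coxeter generators satisfy that every product s_i s_j has finite order. Then X is regular: for any two panels π, π′ of the same cotype, the set of chambers containing π is in bijection with the set of chambers containing π′. -/
/-!
Chamber-adjacency connects any two chambers, so it suffices to identify the `i`-panels of two
`k`-adjacent chambers `d` and `e`. Let `w₀` be the longest element of the finite dihedral group
`⟨sᵢ, sₖ⟩`: it has `sₖ` as a right descent and conjugates `sᵢ` to a simple reflection `sₜ`.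
Thickness gives a third chamber `g` on the common `k`-panel, and a chamber `f` with
`δ(f, g) = w₀ sₖ` then lies at distance `w₀` from both `d` and `e`. Whenever `sⱼ w = w sᵢ` and
`δ(c, d) = w`, projection is a bijection from the `j`-panel of `c` onto the `i`-panel of `d`;
with `c = f` this identifies both `i`-panels with the `t`-panel of `f`.

That the alternating words of length at most the order of `sᵢ sₖ` are reduced comes from Tits'
sign representation, which gives the strong exchange condition for simple reflections.
-/

namespace CoxeterSystem

open List

variable {B W : Type*} [Group W] {M : CoxeterMatrix B} (cs : CoxeterSystem M W)

theorem alternatingWord_two_mul_succ (i j : B) (m : ℕ) :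
    alternatingWord i j (2 * (m + 1)) = i :: j :: alternatingWord i j (2 * m) := by
  rw [show 2 * (m + 1) = 2 * m + 1 + 1 by ring, alternatingWord_succ', alternatingWord_succ']
  simp

theorem prod_map_alternatingWord_two_mul {G : Type*} [Monoid G] (f : B → G) (i j : B) (m : ℕ) :
    ((alternatingWord i j (2 * m)).map f).prod = (f i * f j) ^ m := by
  induction m with
  | zero => simp [alternatingWord]
  | succ m ih => rw [alternatingWord_two_mul_succ, map_cons, map_cons, prod_cons, prod_cons, ih,
      pow_succ', mul_assoc]

theorem rightInvSeq_alternatingWord (i j : B) (m : ℕ) :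
    cs.rightInvSeq (alternatingWord i j m) =
      ((range m).map fun k => (cs.simple j * cs.simple i) ^ k * cs.simple j).reverse := by
  induction m generalizing i j with
  | zero => simp [alternatingWord]
  | succ m ih =>
    rw [alternatingWord_succ, rightInvSeq_concat, ih, range_succ_eq_map, map_cons, map_map,
      map_reverse, map_map, reverse_cons, concat_eq_append]
    congr 2
    · exact map_congr_left fun k _ => by
        simp only [Function.comp_apply, MulAut.conj_apply, cs.inv_simple]
        rw [mul_pow_mul, Nat.succ_eq_add_one, pow_succ']
        simp only [mul_assoc]
    · simp

section ReflectionCocycle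

variable [DecidableEq W]

/-- Tits' action of `s i` on `T × {±1}`, with `W` in place of the set `T` of reflections and
`ZMod 2` for the signs. -/
def reflAction (i : B) : Function.End (W × ZMod 2) :=
  fun x => (cs.simple i * x.1 * cs.simple i, x.2 + if x.1 = cs.simple i then 1 else 0)

theorem prod_map_reflAction_apply (ω : List B) (t : W) (ε : ZMod 2) :
    (ω.map cs.reflAction).prod (t, ε) =
      (cs.wordProd ω * t * (cs.wordProd ω)⁻¹, ε + (cs.rightInvSeq ω).count t) := by
  induction ω with
  | nil =>
    simp only [map_nil, prod_nil, wordProd_nil, one_mul, inv_one, mul_one, rightInvSeq_nil,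
      count_nil, Nat.cast_zero, add_zero]
    rfl
  | cons i ω ih =>
    have hconj : cs.wordProd ω * t * (cs.wordProd ω)⁻¹ = cs.simple i ↔
        (cs.wordProd ω)⁻¹ * cs.simple i * cs.wordProd ω = t := by
      constructor <;> intro h <;> rw [← h] <;> group
    simp only [map_cons, prod_cons, rightInvSeq, count_cons, beq_iff_eq]
    change cs.reflAction i ((ω.map cs.reflAction).prod (t, ε)) = _
    rw [ih, reflAction, if_congr hconj rfl rfl, cs.wordProd_cons]
    refine Prod.ext ?_ ?_
    · simp only [mul_inv_rev, cs.inv_simple, mul_assoc]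
    · push_cast
      ring

theorem isLiftable_reflAction : M.IsLiftable cs.reflAction := by
  intro i j
  funext ⟨t, ε⟩
  rw [← prod_map_alternatingWord_two_mul, prod_map_reflAction_apply, rightInvSeq_alternatingWord]
  have hπ : cs.wordProd (alternatingWord i j (2 * M i j)) = 1 := by
    rw [wordProd, prod_map_alternatingWord_two_mul, simple_mul_simple_pow]
  have hperiod : ∀ k, (cs.simple j * cs.simple i) ^ (M i j + k) = (cs.simple j * cs.simple i) ^ k :=
    fun k => by rw [pow_add, simple_mul_simple_pow', one_mul]
  rw [hπ, two_mul, range_add, map_append, map_map, count_reverse, count_append]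
  simp only [Function.comp_def, hperiod, one_mul, mul_one, inv_one]
  rw [← two_mul, Nat.cast_mul, ZMod.natCast_self, zero_mul, add_zero]
  rfl

theorem natCast_count_rightInvSeq_eq_of_wordProd_eq {ω ω' : List B}
    (h : cs.wordProd ω = cs.wordProd ω') (t : W) :
    ((cs.rightInvSeq ω).count t : ZMod 2) = (cs.rightInvSeq ω').count t := by
  set ρ := cs.lift ⟨_, cs.isLiftable_reflAction⟩
  have hρ (ω : List B) : ρ (cs.wordProd ω) = (ω.map cs.reflAction).prod := by
    rw [wordProd, map_list_prod, map_map]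
    exact congrArg prod (map_congr_left fun i _ => cs.lift_apply_simple _ i)
  have := congrArg (fun w => (ρ w (t, 0)).2) h
  simpa only [hρ, prod_map_reflAction_apply, zero_add] using this

end ReflectionCocycle

theorem simple_mem_rightInvSeq_of_isRightDescent {ω : List B} {i : B}
    (h : cs.IsRightDescent (cs.wordProd ω) i) : cs.simple i ∈ cs.rightInvSeq ω := by
  classical
  obtain ⟨ω', hω', hω'π⟩ := cs.exists_isReduced (cs.wordProd ω * cs.simple i)
  have hπ : cs.wordProd (ω'.concat i) = cs.wordProd ω := by
    rw [wordProd_concat, ← hω'π, simple_mul_simple_cancel_right]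
  have hnotmem : cs.simple i ∉ cs.rightInvSeq ω' := fun hmem => by
    have := (cs.isRightInversion_of_mem_rightInvSeq hω' hmem).2
    rw [← hω'π, simple_mul_simple_cancel_right] at this
    exact (lt_asymm h) this
  have hnotmem' : cs.simple i ∉ (cs.rightInvSeq ω').map (MulAut.conj (cs.simple i)) := by
    rw [mem_map]
    rintro ⟨t, ht, hti⟩
    rw [MulAut.conj_apply, mul_inv_eq_iff_eq_mul, mul_right_inj] at hti
    exact hnotmem (hti ▸ ht)
  have hcount := cs.natCast_count_rightInvSeq_eq_of_wordProd_eq hπ (cs.simple i)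
  rw [rightInvSeq_concat, concat_eq_append, count_append, count_singleton_self,
    count_eq_zero_of_not_mem hnotmem', zero_add, Nat.cast_one] at hcount
  refine count_pos_iff.1 (Nat.pos_of_ne_zero fun h0 => ?_)
  rw [h0, Nat.cast_zero] at hcount
  exact one_ne_zero hcount

theorem isReduced_alternatingWord (i j : B) {m : ℕ}
    (hm : m ≤ orderOf (cs.simple i * cs.simple j)) : cs.IsReduced (alternatingWord i j m) := by
  induction m generalizing i j with
  | zero => simp [IsReduced, alternatingWord]
  | succ m ih =>
    have horder : orderOf (cs.simple j * cs.simple i) = orderOf (cs.simple i * cs.simple j) := by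
      rw [← orderOf_inv, mul_inv_rev, inv_simple, inv_simple]
    have hred : cs.IsReduced (alternatingWord j i m) := ih j i (by omega)
    rw [IsReduced, alternatingWord_succ, wordProd_concat, length_concat, length_alternatingWord]
    rcases cs.length_mul_simple (cs.wordProd (alternatingWord j i m)) j with hlen | hlen
    · rw [hlen, hred.eq, length_alternatingWord]
    · have hmem := cs.simple_mem_rightInvSeq_of_isRightDescent (ω := alternatingWord j i m)
        (i := j) (by rw [IsRightDescent]; omega)
      rw [rightInvSeq_alternatingWord, mem_reverse, mem_map] at hmem
      obtain ⟨k, hk, hkj⟩ := hmem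
      rw [mem_range] at hk
      refine absurd ?_ (pow_ne_one_of_lt_orderOf (x := cs.simple i * cs.simple j)
        (Nat.succ_ne_zero k) (by omega))
      rw [pow_succ, ← mul_assoc, hkj, simple_mul_simple_self]

theorem wordProd_alternatingWord_orderOf_swap (i j : B) :
    cs.wordProd (alternatingWord i j (orderOf (cs.simple i * cs.simple j))) =
      cs.wordProd (alternatingWord j i (orderOf (cs.simple i * cs.simple j))) := by
  set x := cs.simple i * cs.simple j
  have hx : x ^ orderOf x = 1 := pow_orderOf_eq_one x
  have hinv : cs.simple j * cs.simple i = x⁻¹ := by rw [mul_inv_rev, inv_simple, inv_simple]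
  rw [prod_alternatingWord_eq_mul_pow, prod_alternatingWord_eq_mul_pow, hinv, inv_pow]
  obtain ⟨q, hq | hq⟩ := Nat.even_or_odd' (orderOf x)
  · rw [hq] at hx ⊢
    simp only [even_two, Even.mul_right, if_true, one_mul, Nat.mul_div_cancel_left q two_pos]
    refine eq_inv_of_mul_eq_one_left ?_
    rwa [← pow_add, ← two_mul]
  · rw [hq] at hx ⊢
    have hodd : ¬Even (2 * q + 1) := Nat.not_even_iff_odd.2 ⟨q, rfl⟩
    simp only [hodd, if_false]
    rw [show (2 * q + 1) / 2 = q by omega]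
    refine mul_left_cancel (a := cs.simple i) ?_
    rw [← mul_assoc, ← mul_assoc, simple_mul_simple_self, one_mul, ← pow_succ']
    refine eq_inv_of_mul_eq_one_left ?_
    rwa [← pow_add, show q + 1 + q = 2 * q + 1 by omega]

theorem simple_mul_wordProd_alternatingWord_orderOf (i j : B) :
    cs.simple (if Even (orderOf (cs.simple i * cs.simple j)) then i else j) *
        cs.wordProd (alternatingWord i j (orderOf (cs.simple i * cs.simple j))) =
      cs.wordProd (alternatingWord i j (orderOf (cs.simple i * cs.simple j))) * cs.simple i := by
  have h := congrArg cs.wordProd (alternatingWord_succ' j i (orderOf (cs.simple i * cs.simple j)))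
  rw [alternatingWord_succ, wordProd_concat, wordProd_cons,
    ← wordProd_alternatingWord_orderOf_swap] at h
  exact h.symm

theorem isRightDescent_wordProd_alternatingWord (i j : B) {m : ℕ} (hm₀ : 0 < m)
    (hm : m ≤ orderOf (cs.simple i * cs.simple j)) :
    cs.IsRightDescent (cs.wordProd (alternatingWord i j m)) j := by
  obtain ⟨m, rfl⟩ := Nat.exists_eq_add_of_lt hm₀
  rw [IsRightDescent, (cs.isReduced_alternatingWord i j hm).eq, length_alternatingWord,
    zero_add, alternatingWord_succ, wordProd_concat, simple_mul_simple_cancel_right]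
  exact (cs.length_wordProd_le _).trans_lt (by simp)

end CoxeterSystem

section Building

variable {B W C : Type*} [Group W] {M : CoxeterMatrix B} {cs : CoxeterSystem M W}
  {δ : C → C → W}

/-- The axioms (W1)–(W3) of a building viewed as a `W`-metric space on its chambers, with (W2)
split into its two halves. -/
structure IsWDistance (cs : CoxeterSystem M W) (δ : C → C → W) : Prop where
  eq_one_iff (c d : C) : δ c d = 1 ↔ c = d
  mul_simple_or_eq (c d e : C) (i : B) :
    δ d e = cs.simple i → δ c e = δ c d * cs.simple i ∨ δ c e = δ c d
  eq_mul_simple (c d e : C) (i : B) : δ d e = cs.simple i →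
    cs.length (δ c d * cs.simple i) = cs.length (δ c d) + 1 → δ c e = δ c d * cs.simple i
  exists_mul_simple (c d : C) (i : B) : ∃ e, δ d e = cs.simple i ∧ δ c e = δ c d * cs.simple i
  inv_eq (c d : C) : δ d c = (δ c d)⁻¹

namespace IsWDistance

variable (cs δ) in
def panel (i : B) (c : C) : Set C := {e | δ c e = 1 ∨ δ c e = cs.simple i}

variable {i j k : B} {c d e : C} {w : W}

theorem self_mem_panel (hδ : IsWDistance cs δ) (i : B) (c : C) : c ∈ panel cs δ i c :=
  Or.inl ((hδ.eq_one_iff c c).2 rfl)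

theorem mem_panel_comm (hδ : IsWDistance cs δ) (h : d ∈ panel cs δ i c) :
    c ∈ panel cs δ i d := by
  change δ d c = 1 ∨ δ d c = cs.simple i
  rw [hδ.inv_eq]
  rcases h with h | h <;> simp [h]

theorem mem_panel_trans (hδ : IsWDistance cs δ) (hd : d ∈ panel cs δ i c)
    (he : e ∈ panel cs δ i d) : e ∈ panel cs δ i c := by
  rcases he with he | he
  · rwa [← (hδ.eq_one_iff d e).1 he]
  · rcases hδ.mul_simple_or_eq c d e i he with hce | hce
    · rcases hd with hd | hd
      · exact Or.inr (by rw [hce, hd, one_mul])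
      · exact Or.inl (by rw [hce, hd, cs.simple_mul_simple_self])
    · change δ c e = 1 ∨ δ c e = cs.simple i
      rwa [hce]

theorem panel_eq_of_mem (hδ : IsWDistance cs δ) (h : d ∈ panel cs δ i c) :
    panel cs δ i d = panel cs δ i c :=
  Set.ext fun _ => ⟨hδ.mem_panel_trans h, hδ.mem_panel_trans (hδ.mem_panel_comm h)⟩

theorem exists_delta_eq (hδ : IsWDistance cs δ) (c : C) (w : W) : ∃ d, δ c d = w := by
  induction w using cs.simple_induction_right with
  | one => exact ⟨c, (hδ.eq_one_iff c c).2 rfl⟩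
  | mul_simple_right w i ih =>
    obtain ⟨d, rfl⟩ := ih
    obtain ⟨e, -, he⟩ := hδ.exists_mul_simple c d i
    exact ⟨e, he⟩

theorem reflTransGen_adjacent (hδ : IsWDistance cs δ) (c d : C) :
    Relation.ReflTransGen (fun x y => ∃ k, δ x y = cs.simple k) c d := by
  suffices ∀ w d, δ c d = w → Relation.ReflTransGen (fun x y => ∃ k, δ x y = cs.simple k) c d from
    this _ d rfl
  intro w
  induction w using cs.simple_induction_right with
  | one => intro d hd; rw [(hδ.eq_one_iff c d).1 hd]
  | mul_simple_right w k ih =>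
    intro d hd
    obtain ⟨e, hde, hce⟩ := hδ.exists_mul_simple c d k
    rw [hd, cs.simple_mul_simple_cancel_right] at hce
    exact (ih e hce).tail ⟨k, by rw [hδ.inv_eq, hde, cs.inv_simple]⟩

theorem existsUnique_mem_panel_delta_eq (hδ : IsWDistance cs δ)
    (hcomm : cs.simple j * w = w * cs.simple i)
    (hlen : cs.length (w * cs.simple i) = cs.length w + 1) (hcd : δ c d = w) {x : C}
    (hx : x ∈ panel cs δ j c) : ∃! y, y ∈ panel cs δ i d ∧ δ x y = w := by
  have hxd : δ x d = w ∨ δ x d = w * cs.simple i := by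
    rcases hx with hx | hx
    · rw [← (hδ.eq_one_iff c x).1 hx]
      exact Or.inl hcd
    · rcases hδ.mul_simple_or_eq d c x j hx with h | h
      · right
        rw [hδ.inv_eq, h, hδ.inv_eq c d, hcd, mul_inv_rev, cs.inv_simple, inv_inv, hcomm]
      · left
        rw [hδ.inv_eq, h, hδ.inv_eq c d, hcd, inv_inv]
  refine existsUnique_of_exists_of_unique ?_ ?_
  · rcases hxd with h | h
    · exact ⟨d, hδ.self_mem_panel i d, h⟩
    · obtain ⟨y, hdy, hxy⟩ := hδ.exists_mul_simple x d i
      exact ⟨y, Or.inr hdy, by rw [hxy, h, cs.simple_mul_simple_cancel_right]⟩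
  · rintro y y' ⟨hy, hxy⟩ ⟨hy', hxy'⟩
    rcases hδ.mem_panel_trans (hδ.mem_panel_comm hy) hy' with h | h
    · exact (hδ.eq_one_iff y y').1 h
    · have h' := hδ.eq_mul_simple x y y' i h (by rwa [hxy])
      rw [hxy, hxy'] at h'
      have := congrArg cs.length h'
      omega

theorem nonempty_panel_equiv_of_length_mul_simple (hδ : IsWDistance cs δ)
    (hcomm : cs.simple j * w = w * cs.simple i)
    (hlen : cs.length (w * cs.simple i) = cs.length w + 1) (hcd : δ c d = w) :
    Nonempty (panel cs δ j c ≃ panel cs δ i d) := by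
  have hcomm' : cs.simple i * w⁻¹ = w⁻¹ * cs.simple j := by
    simpa only [mul_inv_rev, cs.inv_simple] using (congrArg (·⁻¹) hcomm).symm
  have hlen' : cs.length (w⁻¹ * cs.simple j) = cs.length w⁻¹ + 1 := by
    rw [← cs.length_inv, mul_inv_rev, inv_inv, cs.inv_simple, hcomm, hlen, cs.length_inv]
  have fwd (x : panel cs δ j c) := hδ.existsUnique_mem_panel_delta_eq hcomm hlen hcd x.2
  have bwd (y : panel cs δ i d) :=
    hδ.existsUnique_mem_panel_delta_eq hcomm' hlen' (by rw [hδ.inv_eq, hcd]) y.2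
  choose f hf using fun x => (fwd x).exists
  choose g hg using fun y => (bwd y).exists
  refine ⟨⟨fun x => ⟨f x, (hf x).1⟩, fun y => ⟨g y, (hg y).1⟩, fun x => ?_, fun y => ?_⟩⟩
  · exact Subtype.ext <| (bwd _).unique (hg _) ⟨x.2, by rw [hδ.inv_eq, (hf x).2]⟩
  · exact Subtype.ext <| (fwd _).unique (hf _) ⟨y.2, by rw [hδ.inv_eq, (hg y).2, inv_inv]⟩

theorem nonempty_panel_equiv_of_simple_mul_eq (hδ : IsWDistance cs δ)
    (hcomm : cs.simple j * w = w * cs.simple i) (hcd : δ c d = w) :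
    Nonempty (panel cs δ j c ≃ panel cs δ i d) := by
  rcases cs.length_mul_simple w i with hlen | hlen
  · exact hδ.nonempty_panel_equiv_of_length_mul_simple hcomm hlen hcd
  · obtain ⟨d', hdd', hcd'⟩ := hδ.exists_mul_simple c d i
    rw [hcd] at hcd'
    rw [← hδ.panel_eq_of_mem (Or.inr hdd')]
    refine hδ.nonempty_panel_equiv_of_length_mul_simple ?_ ?_ hcd'
    · rw [← mul_assoc, hcomm]
    · rw [cs.simple_mul_simple_cancel_right]
      omega

theorem exists_delta_eq_simple_of_delta_eq_simple (hδ : IsWDistance cs δ)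
    (hthick : ∃ x y, x ≠ y ∧ δ d x = cs.simple k ∧ δ d y = cs.simple k)
    (hde : δ d e = cs.simple k) : ∃ g, δ g d = cs.simple k ∧ δ g e = cs.simple k := by
  obtain ⟨x, y, hxy, hx, hy⟩ := hthick
  obtain ⟨g, hge, hdg⟩ : ∃ g, g ≠ e ∧ δ d g = cs.simple k := by
    by_cases hxe : x = e
    · exact ⟨y, fun h => hxy (hxe.trans h.symm), hy⟩
    · exact ⟨x, hxe, hx⟩
  refine ⟨g, by rw [hδ.inv_eq, hdg, cs.inv_simple], ?_⟩
  rcases hδ.mem_panel_trans (hδ.mem_panel_comm (Or.inr hde)) (Or.inr hdg) with h | h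
  · exact absurd ((hδ.eq_one_iff e g).1 h).symm hge
  · rw [hδ.inv_eq, h, cs.inv_simple]

theorem nonempty_panel_equiv_of_delta_eq_simple (hδ : IsWDistance cs δ)
    (hthick : ∃ x y, x ≠ y ∧ δ d x = cs.simple k ∧ δ d y = cs.simple k) (hik : M i k ≠ 0)
    (hde : δ d e = cs.simple k) : Nonempty (panel cs δ i d ≃ panel cs δ i e) := by
  have hn : 0 < orderOf (cs.simple i * cs.simple k) := orderOf_pos_iff.2 <|
    isOfFinOrder_iff_pow_eq_one.2 ⟨M i k, Nat.pos_of_ne_zero hik, cs.simple_mul_simple_pow i k⟩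
  have hdesc := cs.isRightDescent_wordProd_alternatingWord i k hn le_rfl
  have hcomm := cs.simple_mul_wordProd_alternatingWord_orderOf i k
  generalize cs.wordProd _ = w₀ at hdesc hcomm
  have hlen : cs.length (w₀ * cs.simple k * cs.simple k) = cs.length (w₀ * cs.simple k) + 1 := by
    rw [cs.simple_mul_simple_cancel_right]
    exact (cs.isRightDescent_iff.1 hdesc).symm
  obtain ⟨g, hgd, hge⟩ := hδ.exists_delta_eq_simple_of_delta_eq_simple hthick hde
  obtain ⟨f, hgf⟩ := hδ.exists_delta_eq g (w₀ * cs.simple k)⁻¹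
  have hfg : δ f g = w₀ * cs.simple k := by rw [hδ.inv_eq, hgf, inv_inv]
  have hf (x : C) (hgx : δ g x = cs.simple k) : δ f x = w₀ := by
    have h := hδ.eq_mul_simple f g x k hgx (by rwa [hfg])
    rwa [hfg, cs.simple_mul_simple_cancel_right] at h
  obtain ⟨E⟩ := hδ.nonempty_panel_equiv_of_simple_mul_eq hcomm (hf d hgd)
  obtain ⟨F⟩ := hδ.nonempty_panel_equiv_of_simple_mul_eq hcomm (hf e hge)
  exact ⟨E.symm.trans F⟩

theorem nonempty_panel_equiv (hδ : IsWDistance cs δ)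
    (hthick : ∀ c k, ∃ x y, x ≠ y ∧ δ c x = cs.simple k ∧ δ c y = cs.simple k)
    (hfin : ∀ i j, M i j ≠ 0) (i : B) (c d : C) : Nonempty (panel cs δ i c ≃ panel cs δ i d) := by
  induction hδ.reflTransGen_adjacent c d with
  | refl => exact ⟨Equiv.refl _⟩
  | tail _ hadj ih =>
    obtain ⟨k, hk⟩ := hadj
    obtain ⟨E⟩ := ih
    obtain ⟨F⟩ := hδ.nonempty_panel_equiv_of_delta_eq_simple (hthick _ k) (hfin i k) hk
    exact ⟨E.trans F⟩

end IsWDistance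

end Building

theorem thick_building_regular_general {B W C : Type*} [Group W]
    (M : CoxeterMatrix B) (cs : CoxeterSystem M W)
    (hfin : ∀ i j : B, M i j ≠ 0)
    (δ : C → C → W)
    (W1 : ∀ c d : C, δ c d = 1 ↔ c = d)
    (W2 : ∀ (c d e : C) (i : B), δ d e = cs.simple i →
      ((δ c e = δ c d * cs.simple i ∨ δ c e = δ c d) ∧
        (cs.length (δ c d * cs.simple i) = cs.length (δ c d) + 1 →
          δ c e = δ c d * cs.simple i)))
    (W3 : ∀ (c d : C) (i : B), ∃ e : C, δ d e = cs.simple i ∧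
      δ c e = δ c d * cs.simple i)
    (hsym : ∀ c d : C, δ d c = (δ c d)⁻¹)
    (hthick : ∀ (c : C) (i : B), ∃ d e : C, d ≠ e ∧ d ≠ c ∧ e ≠ c ∧
      δ c d = cs.simple i ∧ δ c e = cs.simple i)
    (i : B) (c d : C) :
    Nonempty ({e : C // δ c e = 1 ∨ δ c e = cs.simple i} ≃
      {e : C // δ d e = 1 ∨ δ d e = cs.simple i}) := by
  have hδ : IsWDistance cs δ :=
    ⟨W1, fun c d e i h => (W2 c d e i h).1, fun c d e i h => (W2 c d e i h).2, W3, hsym⟩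
  exact hδ.nonempty_panel_equiv
    (fun c k => (hthick c k).imp fun _ => .imp fun _ => .imp_right fun h => h.2.2) hfin i c d

/-- Let `X` be a thick building of irreducible type `W` whose Coxeter
generators satisfy that every product `s_i s_j` has finite order.  Then `X` is regular:
for any two panels of the same cotype, the set of chambers containing the one is in
bijection with the set of chambers containing the other.

The building is axiomatized via its `W`-metric `δ : C → C → W` on the set `C` of
chambers (axioms (W1)–(W3)); the chambers containing the cotype-`i` panel of a chamber
`c` form the `i`-residue `{e | δ c e = 1 ∨ δ c e = sᵢ}` of `c`, and thickness says each
such residue has at least three elements. -/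
theorem thick_building_regular {B W C : Type*} [Group W]
    (M : CoxeterMatrix B) (cs : CoxeterSystem M W)
    (hfin : ∀ i j : B, M i j ≠ 0)
    (hirr : ∀ A : Set B, (∀ i ∈ A, ∀ j ∉ A, M i j = 2) → A = ∅ ∨ A = Set.univ)
    (δ : C → C → W)
    (W1 : ∀ c d : C, δ c d = 1 ↔ c = d)
    (W2 : ∀ (c d e : C) (i : B), δ d e = cs.simple i →
      ((δ c e = δ c d * cs.simple i ∨ δ c e = δ c d) ∧
        (cs.length (δ c d * cs.simple i) = cs.length (δ c d) + 1 →
          δ c e = δ c d * cs.simple i)))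
    (W3 : ∀ (c d : C) (i : B), ∃ e : C, δ d e = cs.simple i ∧
      δ c e = δ c d * cs.simple i)
    (hsym : ∀ c d : C, δ d c = (δ c d)⁻¹)
    (hthick : ∀ (c : C) (i : B), ∃ d e : C, d ≠ e ∧ d ≠ c ∧ e ≠ c ∧
      δ c d = cs.simple i ∧ δ c e = cs.simple i)
    (i : B) (c d : C) :
    Nonempty ({e : C // δ c e = 1 ∨ δ c e = cs.simple i} ≃
      {e : C // δ d e = 1 ∨ δ d e = cs.simple i}) :=
  thick_building_regular_general M cs hfin δ W1 W2 W3 hsym hthick i c d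
end
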